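/- Let X ⊂ ℝ^d be a finite set of vectors, θ ∈ ℝ^d, and for a probability distribution λ on X define H_λ(θ) = Σ_{x∈X} λ(x) μ'(xᵀθ) x xᵀ. If H_λ(θ) is invertible, then min over probability distributions λ on X of max_{x∈X} μ'(xᵀθ)² ‖x‖²_{H_λ(θ)^{-1}} is at most d/4. -/

import Mathlib

open Matrix

noncomputable def μ (z : ℝ) : ℝ := 1 / (1 + Real.exp (-z))

/-- `H_λ(θ) = ∑_{x ∈ X} λ(x) μ'(xᵀθ) x xᵀ`. -/
noncomputable def Hmat {d : ℕ} (X : Finset (Fin d → ℝ)) (θ : Fin d → ℝ)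
    (w : (Fin d → ℝ) → ℝ) : Matrix (Fin d) (Fin d) ℝ :=
  ∑ x ∈ X, (w x * deriv μ (x ⬝ᵥ θ)) • Matrix.vecMulVec x x

/-!
Rescale each `x` to `y = √(μ'(xᵀθ)) x`, so that `H_λ(θ) = ∑ λ(x) y yᵀ` and
`μ'(xᵀθ)² ‖x‖²_{H⁻¹} = μ'(xᵀθ) ‖y‖²_{H⁻¹} ≤ ‖y‖²_{H⁻¹} / 4`. It remains to see that a D-optimal
design `λ` (one maximising `det H_λ` over the simplex, which exists by compactness) has
`‖y‖²_{H⁻¹} ≤ d` for every `y`: moving weight `s / (1 + s)` onto `y` turns `H` into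
`(H + s y yᵀ) / (1 + s)`, whose determinant is `(1 + s)⁻ᵈ det H (1 + s ‖y‖²_{H⁻¹})` by the matrix
determinant lemma, so maximality gives `1 + s ‖y‖²_{H⁻¹} ≤ (1 + s)ᵈ` for all `s > 0`, and the
derivative at `s = 0` yields `‖y‖²_{H⁻¹} ≤ d`.
-/

open Filter Topology

theorem hasDerivAt_μ (z : ℝ) :
    HasDerivAt μ (Real.exp (-z) / (1 + Real.exp (-z)) ^ 2) z := by
  have h : HasDerivAt (fun t ↦ 1 + Real.exp (-t)) (-Real.exp (-z)) z := by
    simpa using ((Real.hasDerivAt_exp (-z)).comp z (hasDerivAt_neg z)).const_add 1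
  have hμ : μ = fun t ↦ (1 + Real.exp (-t))⁻¹ := funext fun t ↦ one_div _
  rw [hμ]
  exact (h.inv (by positivity)).congr_deriv (by rw [neg_neg])

theorem deriv_μ_pos (z : ℝ) : 0 < deriv μ z := by
  rw [(hasDerivAt_μ z).deriv]; positivity

theorem deriv_μ_le_one_div_four (z : ℝ) : deriv μ z ≤ 1 / 4 := by
  rw [(hasDerivAt_μ z).deriv, div_le_iff₀ (by positivity)]
  nlinarith [sq_nonneg (1 - Real.exp (-z))]

theorem le_of_forall_one_add_mul_le_one_add_pow {d : ℕ} {a : ℝ}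
    (h : ∀ s > 0, 1 + s * a ≤ (1 + s) ^ d) : a ≤ d := by
  have hderiv : HasDerivAt (fun s : ℝ ↦ (1 + s) ^ d) d 0 := by
    simpa using ((hasDerivAt_id (0 : ℝ)).const_add 1).fun_pow d
  have hslope : Tendsto (slope (fun s : ℝ ↦ (1 + s) ^ d) 0) (𝓝[>] 0) (𝓝 d) :=
    (hasDerivAt_iff_tendsto_slope.mp hderiv).mono_left
      (nhdsWithin_mono 0 fun s hs ↦ ne_of_gt hs)
  refine ge_of_tendsto hslope ?_
  filter_upwards [self_mem_nhdsWithin] with s (hs : 0 < s)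
  rw [slope_def_field, le_div_iff₀ (by simpa using hs)]
  simp only [add_zero, one_pow, sub_zero]
  linarith [h s hs]

theorem Matrix.det_add_vecMulVec {n R : Type*} [Fintype n] [DecidableEq n] [CommRing R]
    {M : Matrix n n R} (hM : IsUnit M.det) (u v : n → R) :
    (M + vecMulVec u v).det = M.det * (1 + v ⬝ᵥ M⁻¹ *ᵥ u) := by
  rw [vecMulVec_eq Unit, det_add_replicateCol_mul_replicateRow hM]
  congr 1
  rw [det_unique, Matrix.mul_assoc, ← replicateCol_mulVec, add_apply, one_apply_eq,
    replicateRow_mul_replicateCol_apply]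

section Design

variable {ι n : Type*} [Fintype ι]

noncomputable def designMatrix (v : ι → n → ℝ) (p : ι → ℝ) : Matrix n n ℝ :=
  ∑ i, p i • vecMulVec (v i) (v i)

theorem posSemidef_designMatrix [Fintype n] (v : ι → n → ℝ) {p : ι → ℝ} (hp : ∀ i, 0 ≤ p i) :
    (designMatrix v p).PosSemidef :=
  posSemidef_sum _ fun i _ ↦ by
    simpa using (posSemidef_vecMulVec_self_star (v i)).smul (hp i)

theorem continuous_det_designMatrix [Fintype n] [DecidableEq n] (v : ι → n → ℝ) :
    Continuous fun p ↦ (designMatrix v p).det := by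
  unfold designMatrix
  fun_prop

theorem designMatrix_smul_add_smul_single [DecidableEq ι] (v : ι → n → ℝ) (p : ι → ℝ)
    (a b : ℝ) (i : ι) :
    designMatrix v (a • p + b • Pi.single i 1) =
      a • designMatrix v p + b • vecMulVec (v i) (v i) := by
  simp [designMatrix, add_smul, Finset.sum_add_distrib, Finset.smul_sum, smul_smul,
    Pi.single_apply]

theorem dotProduct_designMatrix_inv_mulVec_le_card_of_isMaxOn [Fintype n] [DecidableEq n]
    [DecidableEq ι] {v : ι → n → ℝ} {p : ι → ℝ} (hp : p ∈ stdSimplex ℝ ι)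
    (hmax : IsMaxOn (fun p ↦ (designMatrix v p).det) (stdSimplex ℝ ι) p)
    (hdet : IsUnit (designMatrix v p).det) (i : ι) :
    v i ⬝ᵥ (designMatrix v p)⁻¹ *ᵥ v i ≤ Fintype.card n := by
  set M := designMatrix v p
  have hM : 0 < M.det :=
    (posSemidef_designMatrix v hp.1).det_nonneg.lt_of_ne' hdet.ne_zero
  refine le_of_forall_one_add_mul_le_one_add_pow fun s hs ↦ ?_
  have hmem : (1 + s)⁻¹ • p + (s / (1 + s)) • Pi.single i 1 ∈ stdSimplex ℝ ι :=
    convex_stdSimplex ℝ ι hp (single_mem_stdSimplex ℝ i) (by positivity) (by positivity)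
      (by field_simp)
  have hdet_s : (designMatrix v ((1 + s)⁻¹ • p + (s / (1 + s)) • Pi.single i 1)).det =
      ((1 + s) ^ Fintype.card n)⁻¹ * (M.det * (1 + s * (v i ⬝ᵥ M⁻¹ *ᵥ v i))) := by
    rw [designMatrix_smul_add_smul_single, div_eq_inv_mul, ← smul_smul, ← smul_add, det_smul,
      ← smul_vecMulVec, det_add_vecMulVec hdet, inv_pow, mulVec_smul, dotProduct_smul,
      smul_eq_mul]
  have hle : (designMatrix v _).det ≤ M.det := hmax hmem
  rw [hdet_s, inv_mul_le_iff₀ (by positivity), mul_comm _ M.det] at hle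
  exact le_of_mul_le_mul_left hle hM

theorem exists_mem_stdSimplex_dotProduct_designMatrix_inv_mulVec_le_card [Fintype n]
    [DecidableEq n] {v : ι → n → ℝ} (h : ∃ p ∈ stdSimplex ℝ ι, IsUnit (designMatrix v p).det) :
    ∃ p ∈ stdSimplex ℝ ι, IsUnit (designMatrix v p).det ∧
      ∀ i, v i ⬝ᵥ (designMatrix v p)⁻¹ *ᵥ v i ≤ Fintype.card n := by
  classical
  obtain ⟨p₀, hp₀, hdet₀⟩ := h
  obtain ⟨p, hp, hmax⟩ := (isCompact_stdSimplex ℝ ι).exists_isMaxOn ⟨p₀, hp₀⟩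
    (continuous_det_designMatrix v).continuousOn
  have hdet : IsUnit (designMatrix v p).det := by
    refine (lt_of_lt_of_le ?_ (hmax hp₀)).ne'.isUnit
    exact (posSemidef_designMatrix v hp₀.1).det_nonneg.lt_of_ne' hdet₀.ne_zero
  exact ⟨p, hp, hdet, dotProduct_designMatrix_inv_mulVec_le_card_of_isMaxOn hp hmax hdet⟩

end Design

theorem Hmat_eq_designMatrix {d : ℕ} (X : Finset (Fin d → ℝ)) (θ : Fin d → ℝ)
    (w : (Fin d → ℝ) → ℝ) :
    Hmat X θ w =
      designMatrix (fun x : X ↦ √(deriv μ (x ⬝ᵥ θ)) • (x : Fin d → ℝ)) (fun x ↦ w x) := by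
  rw [Hmat, designMatrix, ← X.sum_coe_sort]
  refine Finset.sum_congr rfl fun x _ ↦ ?_
  rw [smul_vecMulVec, vecMulVec_smul, smul_smul, smul_smul, mul_assoc,
    Real.mul_self_sqrt (deriv_μ_pos _).le]

theorem H_optimal_design_le_d_div_four (d : ℕ) (X : Finset (Fin d → ℝ))
    (θ : Fin d → ℝ)
    (hinv : ∃ w : (Fin d → ℝ) → ℝ, (∀ x ∈ X, 0 ≤ w x) ∧ (∑ x ∈ X, w x) = 1 ∧
      IsUnit (Hmat X θ w).det) :
    ∃ w : (Fin d → ℝ) → ℝ, (∀ x ∈ X, 0 ≤ w x) ∧ (∑ x ∈ X, w x) = 1 ∧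
      IsUnit (Hmat X θ w).det ∧
      ∀ x ∈ X, (deriv μ (x ⬝ᵥ θ)) ^ 2 * (x ⬝ᵥ ((Hmat X θ w)⁻¹ *ᵥ x)) ≤ d / 4 := by
  classical
  obtain ⟨w₀, hw₀, hsum₀, hdet₀⟩ := hinv
  have hp₀ : (fun x : X ↦ w₀ x) ∈ stdSimplex ℝ X :=
    ⟨fun x ↦ hw₀ x x.2, (X.sum_coe_sort w₀).trans hsum₀⟩
  obtain ⟨p, hp, hdet, hbound⟩ :=
    exists_mem_stdSimplex_dotProduct_designMatrix_inv_mulVec_le_card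
      ⟨_, hp₀, Hmat_eq_designMatrix X θ w₀ ▸ hdet₀⟩
  set w : (Fin d → ℝ) → ℝ := fun x ↦ if hx : x ∈ X then p ⟨x, hx⟩ else 0
  have hwp : (fun x : X ↦ w x) = p := funext fun x ↦ dif_pos x.2
  have hH := Hmat_eq_designMatrix X θ w
  rw [hwp] at hH
  refine ⟨w, fun x hx ↦ ?_, ?_, hH ▸ hdet, fun x hx ↦ ?_⟩
  · simpa [w, hx] using hp.1 ⟨x, hx⟩
  · rw [← X.sum_coe_sort, ← hp.2, ← hwp]
  · set c := deriv μ (x ⬝ᵥ θ)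
    have hc : 0 < c := deriv_μ_pos _
    have hq := hbound ⟨x, hx⟩
    rw [Fintype.card_fin, mulVec_smul, dotProduct_smul, smul_dotProduct, smul_eq_mul,
      smul_eq_mul, ← mul_assoc, Real.mul_self_sqrt hc.le] at hq
    rw [hH]
    calc c ^ 2 * (x ⬝ᵥ (designMatrix _ p)⁻¹ *ᵥ x)
        = c * (c * (x ⬝ᵥ (designMatrix _ p)⁻¹ *ᵥ x)) := by ring
      _ ≤ c * d := mul_le_mul_of_nonneg_left hq hc.le
      _ ≤ 1 / 4 * d := mul_le_mul_of_nonneg_right (deriv_μ_le_one_div_four _) d.cast_nonneg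
      _ = d / 4 := by ring
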